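/- arXiv:1102.2099 — 6 statements merged into one kernel-verified Lean document; each statement's English description precedes it below -/
import Mathlib

section
/- Let G be an abelian group and let S be a generating subset of G with 0 ∈ S. For any subset X of G, one has ∇⁻(∇(X)) + S = X + S, where ∇(Y) = G \ (Y + S) denotes the co-image of Y with respect to S and ∇⁻(Y) = G \ (Y + (−S)) denotes the co-image of Y with respect to −S. -/
open Pointwise

/-- For `∇(X) = (X + S)ᶜ` and `∇⁻(Y) = (Y + (-S))ᶜ`,
one has `∇⁻(∇(X)) + S = X + S`. -/
theorem stmt_0 {G : Type*} [AddCommGroup G] (S : Set G)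
    (hgen : AddSubgroup.closure S = ⊤) (h0 : (0 : G) ∈ S) (X : Set G) :
    ((X + S)ᶜ + (-S))ᶜ + S = X + S := by
  apply Set.Subset.antisymm
  · rintro _ ⟨w, hw, s, hs, rfl⟩
    by_contra h
    exact hw ⟨w + s, h, -s, Set.neg_mem_neg.mpr hs, add_neg_cancel_right w s⟩
  · rintro _ ⟨x, hx, s, hs, rfl⟩
    refine ⟨x, ?_, s, hs, rfl⟩
    rintro ⟨y, hy, t, ht, hxy⟩
    exact hy ⟨x, hx, -t, Set.mem_neg.mp ht, by show x + -t = y; rw [← hxy]; exact add_neg_cancel_right y t⟩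
end

section
/- Let G be an abelian group and let S be a generating subset of G with 0 ∈ S. Suppose S is k-separable and let F be a k-fragment of S. Then −S is k-separable, and moreover: (i) κ_k(S) = κ_k(−S); (ii) if G is finite, then ∇(F) = G \ (F + S) is a k-fragment of −S; (iii) every k-atom A of S is faithful, i.e. |G \ (A + S)| ≥ |A|. -/
open Pointwise

variable {G : Type*} [AddCommGroup G]

/-- The boundary of `X` with respect to `S`: `∂(X) = (X + S) \ X`. -/
def bdry (S X : Set G) : Set G := (X + S) \ X

/-- The co-image of `X` with respect to `S`: `∇(X) = G \ (X + S)`. -/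
def coimg (S X : Set G) : Set G := (X + S)ᶜ

/-- `S` is `k`-separable: some finite `X` has `|X| ≥ k` and `|∇(X)| ≥ k`. -/
def IsSep (S : Set G) (k : ℕ) : Prop :=
  ∃ X : Set G, X.Finite ∧ k ≤ X.encard ∧ k ≤ (coimg S X).encard

/-- The `k`-th connectivity `κ_k(S) = min {|∂(X)| : X finite, |X| ≥ k, |∇(X)| ≥ k}`. -/
noncomputable def kappa (S : Set G) (k : ℕ) : ℕ∞ :=
  ⨅ X ∈ {X : Set G | X.Finite ∧ k ≤ X.encard ∧ k ≤ (coimg S X).encard}, (bdry S X).encard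

/-- `X` is a `k`-fragment of `S`. -/
def IsFragment (S X : Set G) (k : ℕ) : Prop :=
  X.Finite ∧ k ≤ X.encard ∧ k ≤ (coimg S X).encard ∧ (bdry S X).encard = kappa S k

/-- `X` is a `k`-atom of `S`: a `k`-fragment of minimum cardinality. -/
def IsAtomK (S X : Set G) (k : ℕ) : Prop :=
  IsFragment S X k ∧ ∀ Y : Set G, IsFragment S Y k → X.encard ≤ Y.encard

/- ### Auxiliary lemmas -/

lemma encard_neg (X : Set G) : (-X).encard = X.encard := by
  rw [← Set.image_neg_eq_neg, neg_injective.encard_image]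

lemma neg_add_set (X S : Set G) : -X + -S = -(X + S) := by
  ext x
  simp only [Set.mem_neg, Set.mem_add]
  constructor
  · rintro ⟨a, ha, b, hb, rfl⟩
    exact ⟨-a, ha, -b, hb, by abel⟩
  · rintro ⟨a, ha, b, hb, hab⟩
    exact ⟨-a, by simpa using ha, -b, by simpa using hb, by rw [← neg_add, hab, neg_neg]⟩

lemma neg_compl (X : Set G) : -(Xᶜ) = (-X)ᶜ := by
  ext x; simp only [Set.mem_neg, Set.mem_compl_iff]

lemma coimg_neg (S X : Set G) : coimg (-S) (-X) = -(coimg S X) := by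
  simp only [coimg]
  rw [neg_add_set, neg_compl]

lemma bdry_neg (S X : Set G) : bdry (-S) (-X) = -(bdry S X) := by
  ext x
  simp only [bdry, Set.mem_diff, Set.mem_neg, neg_add_set, Set.mem_neg]

lemma kappa_neg_le (S : Set G) (k : ℕ) : kappa (-S) k ≤ kappa S k := by
  apply le_iInf₂
  intro X hX
  obtain ⟨hfin, hcard, hco⟩ := hX
  have hmem : -X ∈ {Y : Set G | Y.Finite ∧ (k : ℕ∞) ≤ Y.encard ∧ k ≤ (coimg (-S) Y).encard} := by
    refine ⟨hfin.neg, ?_, ?_⟩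
    · rwa [encard_neg]
    · rwa [coimg_neg, encard_neg]
  calc kappa (-S) k ≤ (bdry (-S) (-X)).encard := iInf₂_le _ hmem
    _ = (bdry S X).encard := by rw [bdry_neg, encard_neg]

lemma kappa_neg (S : Set G) (k : ℕ) : kappa S k = kappa (-S) k := by
  refine le_antisymm ?_ (kappa_neg_le S k)
  have := kappa_neg_le (-S) k
  rwa [neg_neg] at this

lemma isFragment_neg {S X : Set G} {k : ℕ} (h : IsFragment (-S) X k) :
    IsFragment S (-X) k := by
  obtain ⟨hfin, hcard, hco, hb⟩ := h
  refine ⟨hfin.neg, by rwa [encard_neg], ?_, ?_⟩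
  · have : coimg S (-X) = -(coimg (-S) X) := by
      rw [← coimg_neg, neg_neg]
    rwa [this, encard_neg]
  · have : bdry S (-X) = -(bdry (-S) X) := by
      rw [← bdry_neg, neg_neg]
    rw [this, encard_neg, hb, kappa_neg (-S) k, neg_neg]

/-- `X` is disjoint from `∇(X) + (-S)`. -/
lemma disj_coimg (S X : Set G) (x : G) (hx : x ∈ X) : x ∉ coimg S X + -S := by
  rintro ⟨y, hy, t, ht, rfl⟩
  rw [Set.mem_neg] at ht
  exact hy ⟨y + t, hx, -t, ht, add_neg_cancel_right y t⟩

lemma bdry_coimg_subset (S X : Set G) : bdry (-S) (coimg S X) ⊆ bdry S X := by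
  rintro g ⟨hg1, hg2⟩
  have hg3 : g ∈ X + S := by
    by_contra h
    exact hg2 h
  refine ⟨hg3, fun hgX => disj_coimg S X g hgX hg1⟩

lemma subset_coimg_coimg (S X : Set G) : X ⊆ coimg (-S) (coimg S X) :=
  fun x hx => disj_coimg S X x hx

lemma coimg_fragment {S : Set G} {k : ℕ} {F : Set G} (hF : IsFragment S F k)
    (hfin : (coimg S F).Finite) : IsFragment (-S) (coimg S F) k := by
  obtain ⟨hFfin, hFcard, hFco, hFb⟩ := hF
  have hco : (k : ℕ∞) ≤ (coimg (-S) (coimg S F)).encard :=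
    le_trans hFcard (Set.encard_le_encard (subset_coimg_coimg S F))
  have hle : (bdry (-S) (coimg S F)).encard ≤ kappa (-S) k := by
    calc (bdry (-S) (coimg S F)).encard ≤ (bdry S F).encard :=
          Set.encard_le_encard (bdry_coimg_subset S F)
      _ = kappa S k := hFb
      _ = kappa (-S) k := kappa_neg S k
  have hge : kappa (-S) k ≤ (bdry (-S) (coimg S F)).encard :=
    iInf₂_le _ ⟨hfin, hFco, hco⟩
  exact ⟨hfin, hFco, hco, le_antisymm hle hge⟩

/-- Properties of fragments/atoms with respect to `-S`. -/
theorem stmt_2 (S : Set G) (hgen : AddSubgroup.closure S = ⊤) (h0 : (0 : G) ∈ S)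
    (k : ℕ) (hk : 1 ≤ k) (hsep : IsSep S k) (F : Set G) (hF : IsFragment S F k) :
    IsSep (-S) k ∧
      kappa S k = kappa (-S) k ∧
      (Finite G → IsFragment (-S) (coimg S F) k) ∧
      (∀ A : Set G, IsAtomK S A k → A.encard ≤ (coimg S A).encard) := by
  refine ⟨?_, kappa_neg S k, ?_, ?_⟩
  · obtain ⟨X, hfin, hcard, hco⟩ := hsep
    exact ⟨-X, hfin.neg, by rwa [encard_neg], by rwa [coimg_neg, encard_neg]⟩
  · intro hGfin
    exact coimg_fragment hF (Set.toFinite _)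
  · intro A hA
    by_cases hfin : (coimg S A).Finite
    · have h1 : IsFragment (-S) (coimg S A) k := coimg_fragment hA.1 hfin
      have h2 : IsFragment S (-(coimg S A)) k := isFragment_neg h1
      have := hA.2 _ h2
      rwa [encard_neg] at this
    · rw [Set.encard_eq_top_iff.mpr hfin]
      exact le_top
end

section
/- Let S be a finite generating subset of an abelian group G with 0 ∈ S. If S is 2-separable and κ_2(S) ≤ |S| − 1, then κ_2(S) = κ_1(S). -/
open Pointwise

variable {G : Type*} [AddCommGroup G]

/-- If `S` is `2`-separable and `κ₂(S) ≤ |S| - 1`, then `κ₂(S) = κ₁(S)`. -/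
theorem stmt_3 (S : Set G) (hfin : S.Finite) (hgen : AddSubgroup.closure S = ⊤)
    (h0 : (0 : G) ∈ S) (hsep : IsSep S 2) (hk : kappa S 2 ≤ S.encard - 1) :
    kappa S 2 = kappa S 1 := by
  have h12 : kappa S 1 ≤ kappa S 2 := by
    refine le_iInf₂ fun X hX => iInf₂_le X ?_
    exact ⟨hX.1, le_trans (by norm_num) hX.2.1, le_trans (by norm_num) hX.2.2⟩
  refine le_antisymm ?_ h12
  -- the family of 1-admissible sets
  set F : Set (Set G) :=
    {X : Set G | X.Finite ∧ (1 : ℕ) ≤ X.encard ∧ (1 : ℕ) ≤ (coimg S X).encard} with hF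
  obtain ⟨X₀, hX₀fin, hX₀1, hX₀2⟩ := hsep
  have hX₀mem : X₀ ∈ F :=
    ⟨hX₀fin, le_trans (by norm_num) hX₀1, le_trans (by norm_num) hX₀2⟩
  -- kappa S 1 is attained
  obtain ⟨m, ⟨X₁, hX₁, hfX₁⟩, hmin⟩ :=
    (wellFounded_lt (α := ℕ∞)).has_min ((fun X => (bdry S X).encard) '' F)
      ⟨_, X₀, hX₀mem, rfl⟩
  have hfX₁' : (bdry S X₁).encard = m := hfX₁
  have hκ1 : kappa S 1 = (bdry S X₁).encard := by
    refine le_antisymm (iInf₂_le X₁ hX₁) (le_iInf₂ fun X hX => ?_)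
    rw [hfX₁']
    exact not_lt.1 (hmin _ ⟨X, hX, rfl⟩)
  rw [hκ1]
  obtain ⟨hfin1, h1card, h1co⟩ := hX₁
  by_cases h2 : (2 : ℕ) ≤ X₁.encard ∧ (2 : ℕ) ≤ (coimg S X₁).encard
  · exact iInf₂_le X₁ ⟨hfin1, h2.1, h2.2⟩
  · -- one of the two is a singleton; then |∂X₁| ≥ |S| - 1
    have key : S.encard - 1 ≤ (bdry S X₁).encard := by
      have hS0 : S.encard - 1 ≤ (S \ {0}).encard := by
        rw [tsub_le_iff_right, Set.encard_diff_singleton_add_one h0]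
      rcases not_and_or.1 h2 with h | h
      · -- X₁ = {x}
        have hx1 : X₁.encard = 1 := by
          refine le_antisymm ?_ (by exact_mod_cast h1card)
          refine le_of_not_gt fun hlt => h ?_
          have := Order.add_one_le_of_lt hlt
          norm_num at this ⊢
          exact this
        obtain ⟨x, rfl⟩ := Set.encard_eq_one.1 hx1
        have hsub : (fun s => x + s) '' (S \ {0}) ⊆ bdry S {x} := by
          rintro _ ⟨s, ⟨hs, hs0⟩, rfl⟩
          refine ⟨Set.add_mem_add rfl hs, ?_⟩
          simp only [Set.mem_singleton_iff]
          intro hxs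
          exact hs0 (add_eq_left.1 hxs)
        calc S.encard - 1 ≤ (S \ {0}).encard := hS0
          _ = ((fun s => x + s) '' (S \ {0})).encard :=
              ((add_right_injective x).encard_image _).symm
          _ ≤ (bdry S {x}).encard := Set.encard_le_encard hsub
      · -- coimg S X₁ = {y}
        have hy1 : (coimg S X₁).encard = 1 := by
          refine le_antisymm ?_ (by exact_mod_cast h1co)
          refine le_of_not_gt fun hlt => h ?_
          have := Order.add_one_le_of_lt hlt
          norm_num at this ⊢
          exact this
        obtain ⟨y, hy⟩ := Set.encard_eq_one.1 hy1
        have hsub : (fun s => y - s) '' (S \ {0}) ⊆ bdry S X₁ := by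
          rintro _ ⟨s, ⟨hs, hs0⟩, rfl⟩
          have hne : y - s ≠ y := fun hc => hs0 (sub_eq_self.1 hc)
          have hmem : y - s ∈ X₁ + S := by
            by_contra hcon
            have hcc : y - s ∈ coimg S X₁ := hcon
            rw [hy] at hcc
            exact hne hcc
          refine ⟨hmem, fun hX => ?_⟩
          have hyX : y ∈ X₁ + S := by
            have := Set.add_mem_add hX hs
            simpa using this
          have hyc : y ∈ coimg S X₁ := hy ▸ rfl
          exact hyc hyX
        calc S.encard - 1 ≤ (S \ {0}).encard := hS0
          _ = ((fun s => y - s) '' (S \ {0})).encard := by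
              refine (Function.Injective.encard_image ?_ _).symm
              intro a b hab
              simpa using hab
          _ ≤ (bdry S X₁).encard := Set.encard_le_encard hsub
    exact hk.trans key
end

section
/- Let S be a finite generating Vosper subset of an abelian group G with 0 ∈ S, and let X ⊆ G be a subset with |X| ≥ |S| and |X + S| = |X| + |S| − 1. Then for every y ∈ S, one has |X + (S \ {y})| ≥ |X| + |S| − 2. -/
open Pointwise

/-- `S` is a Vosper subset of `G`: for every `X ⊆ G` with `|X| ≥ 2`,
`|X + S| ≥ min (|G| - 1) (|X| + |S|)`. -/
def IsVosper {G : Type*} [AddCommGroup G] (S : Set G) : Prop :=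
  ∀ X : Set G, 2 ≤ X.encard →
    min ((Set.univ : Set G).encard - 1) (X.encard + S.encard) ≤ (X + S).encard

/-! Write `T = S \ {y}` and split `X` into the good part `X₁ = {x ∈ X | x + y ∈ X + T}` and the
bad part `X₀`. Then `X₁ + S ⊆ X + T`, while `X + T` and `X₀ + y` are disjoint subsets of `X + S`,
so `|X + T| + |X₀| ≤ |X| + |S| - 1`. Suppose `|X + T| < |X| + |S| - 2`. If `|X₁| ≥ 2`, the Vosper
property of `S` applied to `X₁` is violated. If `X₁ = ∅`, the bound contradicts
`|X + T| ≥ |X| ≥ |S|`. If `X₁ = {c}`, counting gives `|X + T| = |X| = |S|`, and the Vosper property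
applied to `{c, a}` with `a` bad forces `|G| = 5` and `|X| = |S| = 3`. Then
`X + t₁ = X + T = X + t₂` for the two elements of `T`, so `X` is invariant under translation by `t₁ - t₂`, which generates the
group of prime order `5`; hence `X = G`, a contradiction.

For infinite `X` the claim is trivial, and for finite `X` the Vosper property applied to `X` itself
shows that `|X + S| < |X| + |S|` is only possible in a finite group. -/

namespace Set

variable {G : Type*} [AddCommGroup G]

lemma encard_le_encard_add {X T : Set G} {t : G} (ht : t ∈ T) : X.encard ≤ (X + T).encard := by
  rw [← (add_left_injective t).encard_image]
  exact encard_le_encard (image_subset_iff.2 fun x hx => add_mem_add hx ht)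

lemma ncard_le_ncard_add [Finite G] {X T : Set G} {t : G} (ht : t ∈ T) :
    X.ncard ≤ (X + T).ncard :=
  ENat.toNat_le_toNat (encard_le_encard_add ht) (toFinite _).encard_lt_top.ne

lemma add_subset_add_diff_singleton_union {S X A : Set G} {y : G} (hA : A ⊆ X) :
    A + S ⊆ (X + (S \ {y})) ∪ (· + y) '' {a ∈ A | a + y ∉ X + (S \ {y})} := by
  rintro _ ⟨a, ha, s, hs, rfl⟩
  by_cases hsy : s = y
  · subst hsy
    by_cases h : a + s ∈ X + (S \ {s})
    · exact Or.inl h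
    · exact Or.inr ⟨a, ⟨ha, h⟩, rfl⟩
  · exact Or.inl (add_mem_add (hA ha) ⟨hs, hsy⟩)

lemma inter_add_subset_add_diff_singleton {S X : Set G} {y : G} :
    X ∩ {x | x + y ∈ X + (S \ {y})} + S ⊆ X + (S \ {y}) := by
  rintro _ ⟨x, hx, s, hs, rfl⟩
  by_cases hsy : s = y
  · exact hsy ▸ hx.2
  · exact add_mem_add hx.1 ⟨hs, hsy⟩

lemma ncard_add_diff_singleton_add_ncard_le [Finite G] {S X : Set G} {y : G} (hy : y ∈ S) :
    (X + (S \ {y})).ncard + {x ∈ X | x + y ∉ X + (S \ {y})}.ncard ≤ (X + S).ncard := by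
  rw [← ncard_image_of_injective {x ∈ X | x + y ∉ X + (S \ {y})} (add_left_injective y),
    ← ncard_union_eq]
  · refine ncard_le_ncard (union_subset (add_subset_add_left sdiff_subset) ?_)
    rintro _ ⟨x, hx, rfl⟩
    exact add_mem_add hx.1 hy
  · exact disjoint_left.2 fun z hz ⟨x, hx, hxz⟩ => hx.2 (by subst hxz; exact hz)

lemma ncard_pair_add_le [Finite G] {S X : Set G} {y c a : G} (hc : c ∈ X)
    (hcy : c + y ∈ X + (S \ {y})) (ha : a ∈ X) :
    ({c, a} + S).ncard ≤ (X + (S \ {y})).ncard + 1 := by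
  have hbad : {b ∈ ({c, a} : Set G) | b + y ∉ X + (S \ {y})} ⊆ {a} := by
    rintro b ⟨rfl | rfl, hb⟩
    exacts [absurd hcy hb, rfl]
  calc ({c, a} + S).ncard
      ≤ (X + (S \ {y}) ∪ (· + y) '' {b ∈ ({c, a} : Set G) | b + y ∉ X + (S \ {y})}).ncard :=
        ncard_le_ncard (add_subset_add_diff_singleton_union (pair_subset hc ha))
    _ ≤ (X + (S \ {y})).ncard + 1 := by
        refine (ncard_union_le _ _).trans (Nat.add_le_add_left ?_ _)
        exact (ncard_image_le).trans ((ncard_le_ncard hbad).trans (ncard_singleton a).le)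

lemma add_sub_mem_of_ncard_add_le [Finite G] {X T : Set G} (h : (X + T).ncard ≤ X.ncard)
    {t₁ t₂ : G} (ht₁ : t₁ ∈ T) (ht₂ : t₂ ∈ T) {x : G} (hx : x ∈ X) : x + (t₁ - t₂) ∈ X := by
  have htranslate : (· + t₂) '' X = X + T := by
    refine eq_of_subset_of_ncard_le (image_subset_iff.2 fun x hx => add_mem_add hx ht₂) ?_
    rwa [ncard_image_of_injective _ (add_left_injective t₂)]
  obtain ⟨x', hx', hx'x⟩ : x + t₁ ∈ (· + t₂) '' X := htranslate ▸ add_mem_add hx ht₁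
  rwa [show x + (t₁ - t₂) = x' by rw [add_sub, ← hx'x, add_sub_cancel_right]]

lemma eq_univ_of_add_mem_of_prime_card (hG : (Nat.card G).Prime)
    {X : Set G} (hX : X.Nonempty) {d : G} (hd : d ≠ 0) (hXd : ∀ x ∈ X, x + d ∈ X) :
    X = univ := by
  have := Fact.mk hG
  obtain ⟨x₀, hx₀⟩ := hX
  have hmultiples : ∀ n : ℕ, x₀ + n • d ∈ X := by
    intro n
    induction n with
    | zero => simpa using hx₀
    | succ n ih => simpa [succ_nsmul, add_assoc] using hXd _ ih
  refine eq_univ_of_forall fun g => ?_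
  obtain ⟨n, hn⟩ := mem_multiples_of_prime_card rfl hd (g' := g - x₀)
  simpa [hn] using hmultiples n

lemma eq_univ_of_ncard_add_le_of_prime_card (hG : (Nat.card G).Prime) {X T : Set G}
    (hX : X.Nonempty) (hT : 1 < T.ncard) (h : (X + T).ncard ≤ X.ncard) : X = univ := by
  have : Finite G := Nat.finite_of_card_ne_zero hG.ne_zero
  obtain ⟨t₁, t₂, ht₁, ht₂, ht⟩ := (one_lt_ncard_iff).1 hT
  exact eq_univ_of_add_mem_of_prime_card hG hX (sub_ne_zero.2 ht)
    fun x hx => add_sub_mem_of_ncard_add_le h ht₁ ht₂ hx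

lemma nonempty_diff_singleton_of_closure_eq_top [Nontrivial G] {S : Set G} (h0 : (0 : G) ∈ S)
    (hgen : AddSubgroup.closure S = ⊤) (y : G) : (S \ {y}).Nonempty := by
  by_contra hT
  rw [not_nonempty_iff_eq_empty, sdiff_eq_empty] at hT
  have hS : S ⊆ {0} := fun s hs => (hT hs).trans (hT h0).symm
  have := AddSubgroup.closure_mono hS
  rw [hgen, AddSubgroup.closure_singleton_zero, top_le_iff] at this
  exact bot_ne_top this

end Set

open Set

section

variable {G : Type*} [AddCommGroup G] {S X : Set G} {y : G}

lemma IsVosper.finite_of_ncard_add_lt (hV : IsVosper S) (hX : X.Finite)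
    (hS : S.Finite) (hX2 : 2 ≤ X.ncard) (h : (X + S).ncard < X.ncard + S.ncard) : Finite G := by
  refine finite_univ_iff.1 (encard_ne_top_iff.1 fun htop => ?_)
  have hmin := hV X (by rw [← hX.cast_ncard_eq]; exact_mod_cast hX2)
  rw [htop, ← hX.cast_ncard_eq, ← hS.cast_ncard_eq, ← (hX.add hS).cast_ncard_eq] at hmin
  simp only [ENat.top_sub_one, le_top, min_eq_right] at hmin
  exact hmin.not_gt (by exact_mod_cast h)

lemma IsVosper.min_le_ncard_add [Finite G] (hV : IsVosper S) {A : Set G} (hA : 2 ≤ A.ncard) :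
    min (Nat.card G - 1) (A.ncard + S.ncard) ≤ (A + S).ncard := by
  have := hV A (by rw [← A.toFinite.cast_ncard_eq]; exact_mod_cast hA)
  rw [← A.toFinite.cast_ncard_eq, ← S.toFinite.cast_ncard_eq, ← (A + S).toFinite.cast_ncard_eq,
    ← (univ : Set G).toFinite.cast_ncard_eq, ncard_univ] at this
  exact (Nat.cast_le (α := ℕ∞)).1 (by rwa [(Nat.mono_cast (α := ℕ∞)).map_min])

theorem IsVosper.ncard_add_ncard_le_ncard_add_diff_singleton [Finite G] (hV : IsVosper S)
    (hy : y ∈ S) (hT : (S \ {y}).Nonempty) (hSX : S.ncard ≤ X.ncard)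
    (hXS : (X + S).ncard + 1 = X.ncard + S.ncard) :
    X.ncard + S.ncard ≤ (X + (S \ {y})).ncard + 2 := by
  set T := S \ {y}
  set good := {x | x + y ∈ X + T}
  have hsplit := ncard_inter_add_ncard_sdiff_eq_ncard X good
  have hbad : (X + T).ncard + (X \ good).ncard ≤ (X + S).ncard :=
    ncard_add_diff_singleton_add_ncard_le hy
  have hXT : X.ncard ≤ (X + T).ncard := ncard_le_ncard_add hT.some_mem
  have hXSG : (X + S).ncard ≤ Nat.card G := ncard_le_card _
  by_contra! hlt
  obtain hgood | hgood | hgood :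
      (X ∩ good).ncard = 0 ∨ (X ∩ good).ncard = 1 ∨ 2 ≤ (X ∩ good).ncard := by
    omega
  · omega
  · obtain ⟨c, hc⟩ := ncard_eq_one.1 hgood
    have hc : c ∈ X ∩ good := hc ▸ mem_singleton c
    obtain ⟨a, ha⟩ : (X \ good).Nonempty := nonempty_of_ncard_ne_zero (by omega)
    have hca : c ≠ a := by rintro rfl; exact ha.2 hc.2
    have hpair := hV.min_le_ncard_add (ncard_pair hca).ge
    have hcover : ({c, a} + S).ncard ≤ (X + T).ncard + 1 := ncard_pair_add_le hc.1 hc.2 ha.1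
    rw [ncard_pair hca] at hpair
    have hG5 : Nat.card G = 5 := by omega
    have hT2 : 1 < T.ncard := by rw [ncard_sdiff_singleton_of_mem hy]; omega
    have hXuniv := eq_univ_of_ncard_add_le_of_prime_card (hG5 ▸ Nat.prime_five) ⟨a, ha.1⟩ hT2
      (by omega)
    have := congrArg ncard hXuniv
    rw [ncard_univ] at this
    omega
  · have := hV.min_le_ncard_add hgood
    have : (X ∩ good + S).ncard ≤ (X + T).ncard :=
      ncard_le_ncard inter_add_subset_add_diff_singleton
    omega

theorem IsVosper.encard_add_sub_two_le_encard_add_diff_singleton (hV : IsVosper S)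
    (hy : y ∈ S) (hT : (S \ {y}).Nonempty) (hXfin : X.Finite) (hX : S.encard ≤ X.encard)
    (heq : (X + S).encard = X.encard + S.encard - 1) :
    X.encard + S.encard - 2 ≤ (X + (S \ {y})).encard := by
  have hSfin : S.Finite := finite_of_encard_le_coe (hX.trans hXfin.cast_ncard_eq.ge)
  rw [← hXfin.cast_ncard_eq, ← hSfin.cast_ncard_eq] at hX heq ⊢
  rw [← (hXfin.add hSfin).cast_ncard_eq] at heq
  have hS2 : 1 < S.ncard :=
    (one_lt_ncard_iff hSfin).2 ⟨y, hT.some, hy, hT.some_mem.1, Ne.symm hT.some_mem.2⟩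
  have hSX : S.ncard ≤ X.ncard := by exact_mod_cast hX
  have hXS : (X + S).ncard + 1 = X.ncard + S.ncard := by
    have : (X + S).ncard = X.ncard + S.ncard - 1 := by exact_mod_cast heq
    omega
  have : Finite G := hV.finite_of_ncard_add_lt hXfin hSfin (by omega) (by omega)
  have := hV.ncard_add_ncard_le_ncard_add_diff_singleton hy hT hSX hXS
  rw [← (toFinite (X + (S \ {y}))).cast_ncard_eq]
  exact_mod_cast (by omega : X.ncard + S.ncard - 2 ≤ (X + (S \ {y})).ncard)

end

theorem stmt_8_general {G : Type*} [AddCommGroup G] (S : Set G)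
    (h0 : (0 : G) ∈ S) (hgen : AddSubgroup.closure S = ⊤) (hV : IsVosper S)
    (X : Set G) (hX : S.encard ≤ X.encard)
    (heq : (X + S).encard = X.encard + S.encard - 1) :
    ∀ y ∈ S, X.encard + S.encard - 2 ≤ (X + (S \ {y})).encard := by
  intro y hy
  rcases subsingleton_or_nontrivial G with hG | hG
  · have hXS : X.encard + S.encard ≤ 2 := add_le_add
      (encard_le_one_iff_subsingleton.2 subsingleton_of_subsingleton)
      (encard_le_one_iff_subsingleton.2 subsingleton_of_subsingleton)
    rw [tsub_eq_zero_of_le hXS]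
    exact zero_le
  have hT := nonempty_diff_singleton_of_closure_eq_top h0 hgen y
  obtain hXinf | hXfin := X.infinite_or_finite
  · have := hXinf.encard_eq ▸ encard_le_encard_add (X := X) hT.some_mem
    rw [top_le_iff.1 this]
    exact le_top
  exact hV.encard_add_sub_two_le_encard_add_diff_singleton hy hT hXfin hX heq

/-- If `S` is a finite generating Vosper subset with `0 ∈ S`,
and `|X| ≥ |S|` with `|X + S| = |X| + |S| - 1`, then for every `y ∈ S`,
`|X + (S \ {y})| ≥ |X| + |S| - 2`. -/
theorem stmt_8 {G : Type*} [AddCommGroup G] (S : Set G) (hfin : S.Finite)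
    (h0 : (0 : G) ∈ S) (hgen : AddSubgroup.closure S = ⊤) (hV : IsVosper S)
    (X : Set G) (hX : S.encard ≤ X.encard)
    (heq : (X + S).encard = X.encard + S.encard - 1) :
    ∀ y ∈ S, X.encard + S.encard - 2 ≤ (X + (S \ {y})).encard :=
  stmt_8_general S h0 hgen hV X hX heq
end

section
/- Let G be an abelian group and S a finite generating subset with 0 ∈ S and S ≠ G. Let H be a subgroup of G which is a 1-fragment of S. Then H is faithful (|G \ (H + S)| ≥ |H|) and κ_1(φ_H(S)) = |φ_H(S)| − 1, where φ_H : G → G/H is the canonical morphism. -/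
/-! Since `H` is a subgroup, `H + S` and `∂(H)` are unions of cosets of `H`: they are the
preimages under `φ_H` of `φ_H(S)` and of `φ_H(S) \ {0}`. Faithfulness follows by translating
a point of `∇(H)` by `H`. In `G/H` the set `{0}` gives `κ₁(φ_H(S)) ≤ |φ_H(S)| - 1`.
Conversely, the preimage of an admissible `Y ⊆ G/H` is admissible for `S`, with boundary of size
`|H| · |∂(Y)|`; comparing with `|∂(H)| = |H| · (|φ_H(S)| - 1) = κ₁(S)` and cancelling the
finite, nonzero factor `|H|` gives the reverse inequality. -/

open Pointwise

variable {G : Type*} [AddCommGroup G]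

lemma kappa_one_le_encard_bdry {S X : Set G} (hX : X.Finite) (hne : X.Nonempty)
    (hS : (coimg S X).Nonempty) : kappa S 1 ≤ (bdry S X).encard :=
  iInf₂_le (f := fun X _ => (bdry S X).encard) X
    ⟨hX, by simpa [Set.one_le_encard_iff_nonempty], by simpa [Set.one_le_encard_iff_nonempty]⟩

lemma bdry_zero (S : Set G) : bdry S {0} = S \ {0} := by
  simp [bdry]

lemma coimg_zero (S : Set G) : coimg S {0} = Sᶜ := by
  simp [coimg]

lemma kappa_one_le_encard_sub_one {S : Set G} (h0 : (0 : G) ∈ S) (hS : Sᶜ.Nonempty) :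
    kappa S 1 ≤ S.encard - 1 := by
  have h := kappa_one_le_encard_bdry (S := S) (Set.finite_singleton (0 : G))
    (Set.singleton_nonempty 0) (by rwa [coimg_zero])
  rwa [bdry_zero, Set.encard_sdiff_singleton_of_mem h0] at h

lemma encard_le_encard_coimg_of_addSubgroup {S : Set G} {H : AddSubgroup G}
    (hS : (coimg S (H : Set G)).Nonempty) :
    (H : Set G).encard ≤ (coimg S (H : Set G)).encard := by
  obtain ⟨a, ha⟩ := hS
  have hcoset : (a + ·) '' (H : Set G) ⊆ coimg S H := by
    rintro _ ⟨h, hh, rfl⟩ ⟨h', hh', s, hs, hsum⟩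
    exact ha ⟨h' - h, H.sub_mem hh' hh, s, hs, by
      simp only at hsum ⊢
      rw [sub_add_eq_add_sub, hsum, add_sub_cancel_right]⟩
  calc (H : Set G).encard = ((a + ·) '' (H : Set G)).encard :=
        ((add_right_injective a).encard_image _).symm
    _ ≤ _ := Set.encard_le_encard hcoset

section Preimage

variable {K : Type*} [AddCommGroup K] (f : G →+ K)

lemma preimage_add_image (Y : Set K) (S : Set G) : f ⁻¹' Y + S = f ⁻¹' (Y + f '' S) := by
  ext g
  constructor
  · rintro ⟨x, hx, s, hs, rfl⟩
    exact ⟨f x, hx, f s, ⟨s, hs, rfl⟩, (map_add f x s).symm⟩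
  · rintro ⟨y, hy, _, ⟨s, hs, rfl⟩, hg⟩
    refine ⟨g - s, ?_, s, hs, sub_add_cancel g s⟩
    rw [Set.mem_preimage, map_sub, ← hg, add_sub_cancel_right]
    exact hy

lemma bdry_preimage (S : Set G) (Y : Set K) : bdry S (f ⁻¹' Y) = f ⁻¹' bdry (f '' S) Y := by
  rw [bdry, bdry, preimage_add_image, Set.preimage_sdiff]

lemma coimg_preimage (S : Set G) (Y : Set K) :
    coimg S (f ⁻¹' Y) = f ⁻¹' coimg (f '' S) Y := by
  rw [coimg, coimg, preimage_add_image, Set.preimage_compl]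

end Preimage

lemma encard_preimage_mk (H : AddSubgroup G) (Y : Set (G ⧸ H)) :
    ((QuotientAddGroup.mk : G → G ⧸ H) ⁻¹' Y).encard = (H : Set G).encard * Y.encard :=
  (ENat.card_congr (QuotientAddGroup.preimageMkEquivAddSubgroupProdSet H Y)).trans
    (ENat.card_prod _ _)

section Quotient

variable (S : Set G) (H : AddSubgroup G)

lemma bdry_preimage_mk (Y : Set (G ⧸ H)) :
    bdry S (QuotientAddGroup.mk ⁻¹' Y) =
      QuotientAddGroup.mk ⁻¹' bdry (QuotientAddGroup.mk '' S) Y :=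
  bdry_preimage (QuotientAddGroup.mk' H) S Y

lemma coimg_preimage_mk (Y : Set (G ⧸ H)) :
    coimg S (QuotientAddGroup.mk ⁻¹' Y) =
      QuotientAddGroup.mk ⁻¹' coimg (QuotientAddGroup.mk '' S) Y :=
  coimg_preimage (QuotientAddGroup.mk' H) S Y

lemma bdry_addSubgroup :
    bdry S (H : Set G) =
      QuotientAddGroup.mk ⁻¹' ((QuotientAddGroup.mk '' S : Set (G ⧸ H)) \ {0}) := by
  rw [← bdry_zero, ← bdry_preimage_mk, ← QuotientAddGroup.preimage_mk_zero]
  rfl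

lemma coimg_addSubgroup :
    coimg S (H : Set G) =
      QuotientAddGroup.mk ⁻¹' (QuotientAddGroup.mk '' S : Set (G ⧸ H))ᶜ := by
  rw [← coimg_zero, ← coimg_preimage_mk, ← QuotientAddGroup.preimage_mk_zero]
  rfl

end Quotient

lemma encard_sdiff_zero_le_kappa_of_isFragment {S : Set G} {H : AddSubgroup G}
    (hH : IsFragment S (H : Set G) 1) :
    ((QuotientAddGroup.mk '' S : Set (G ⧸ H)) \ {0}).encard ≤
      kappa (QuotientAddGroup.mk '' S : Set (G ⧸ H)) 1 := by
  obtain ⟨hHfin, -, -, hHκ⟩ := hH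
  have hH0 : (H : Set G).encard ≠ 0 := Set.encard_ne_zero.mpr ⟨0, H.zero_mem⟩
  have hHtop : (H : Set G).encard ≠ ⊤ := hHfin.encard_lt_top.ne
  refine le_iInf₂ fun Y ⟨hY, hY1, hYc⟩ => ?_
  rw [Nat.cast_one, Set.one_le_encard_iff_nonempty] at hY1 hYc
  have hfin : (QuotientAddGroup.mk ⁻¹' Y : Set G).Finite := by
    rw [← Set.encard_ne_top_iff, encard_preimage_mk]
    exact WithTop.mul_ne_top hHtop hY.encard_lt_top.ne
  rw [← ENat.mul_le_mul_left_iff hH0 hHtop, ← encard_preimage_mk, ← encard_preimage_mk,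
    ← bdry_addSubgroup, ← bdry_preimage_mk, hHκ]
  refine kappa_one_le_encard_bdry hfin (hY1.preimage QuotientAddGroup.mk_surjective) ?_
  rw [coimg_preimage_mk]
  exact hYc.preimage QuotientAddGroup.mk_surjective

theorem stmt_9_general (S : Set G) (h0 : (0 : G) ∈ S)
    (H : AddSubgroup G) (hH : IsFragment S (H : Set G) 1) :
    (H : Set G).encard ≤ (coimg S (H : Set G)).encard ∧
      kappa ((QuotientAddGroup.mk : G → G ⧸ H) '' S) 1 =
        ((QuotientAddGroup.mk : G → G ⧸ H) '' S).encard - 1 := by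
  have hcoimg : (coimg S (H : Set G)).Nonempty := by
    simpa [Set.one_le_encard_iff_nonempty] using hH.2.2.1
  have h0' : (0 : G ⧸ H) ∈ QuotientAddGroup.mk '' S := ⟨0, h0, rfl⟩
  have hcompl : (QuotientAddGroup.mk '' S : Set (G ⧸ H))ᶜ.Nonempty := by
    obtain ⟨a, ha⟩ := hcoimg
    rw [coimg_addSubgroup] at ha
    exact ⟨_, ha⟩
  refine ⟨encard_le_encard_coimg_of_addSubgroup hcoimg,
    le_antisymm (kappa_one_le_encard_sub_one h0' hcompl) ?_⟩
  rw [← Set.encard_sdiff_singleton_of_mem h0']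
  exact encard_sdiff_zero_le_kappa_of_isFragment hH

/-- If a subgroup `H` is a `1`-fragment of `S`, then `H` is faithful
and `κ₁(φ_H(S)) = |φ_H(S)| - 1`. -/
theorem stmt_9 (S : Set G) (hfin : S.Finite) (h0 : (0 : G) ∈ S)
    (hgen : AddSubgroup.closure S = ⊤) (hne : S ≠ Set.univ)
    (H : AddSubgroup G) (hH : IsFragment S (H : Set G) 1) :
    (H : Set G).encard ≤ (coimg S (H : Set G)).encard ∧
      kappa ((QuotientAddGroup.mk : G → G ⧸ H) '' S) 1 =
        ((QuotientAddGroup.mk : G → G ⧸ H) '' S).encard - 1 :=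
  stmt_9_general S h0 H hH
end

section
/- Let Γ = (V, E) be a locally finite graph and put k = κ_1(Γ). Let X ⊆ V be a finite subset such that |X| ≥ k and |X| + k ≤ |V|. Then there are a k-element subset C ⊆ X and an injection f : C → ∂(X) such that for every c ∈ C, (c, f(c)) is an arc of Γ. -/
/-- The image of a set of vertices under the graph `E ⊆ V × V`:
`Γ(A) = ⋃_{x ∈ A} {y : (x, y) ∈ E}`. -/
def gImage {V : Type*} (E : Set (V × V)) (A : Set V) : Set V :=
  {y | ∃ x ∈ A, (x, y) ∈ E}

/-- The boundary `∂(X) = Γ(X) \ X`. -/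
def gBdry {V : Type*} (E : Set (V × V)) (X : Set V) : Set V :=
  gImage E X \ X

/-- The 1-connectivity of the graph:
`κ₁(Γ) = min {|∂(X)| : X finite, |X| ≥ 1, |V \ Γ(X)| ≥ 1}`. -/
noncomputable def gKappa {V : Type*} (E : Set (V × V)) : ℕ∞ :=
  ⨅ X ∈ {X : Set V | X.Finite ∧ 1 ≤ X.encard ∧ 1 ≤ (gImage E X)ᶜ.encard},
    (gBdry E X).encard

/-!
Hall's theorem with deficiency, applied to the bipartite graph between `X` and `∂(X)`.
For `∅ ≠ A ⊆ X` the boundary `∂(A)` lies in `(X \ A) ∪ (Γ(A) ∩ ∂(X))`. Either `Γ(A) ≠ V`, and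
then `κ₁ ≤ |∂(A)|` is an instance of the minimum defining `κ₁`, or `Γ(A) = V`, and then
`|X| + κ₁ ≤ |V| ≤ |A| + |∂(A)|` gives the same bound. Hence `|A| + κ₁ ≤ |X| + |Γ(A) ∩ ∂(X)|`:
the vertices of `X` have neighbourhood deficiency at most `|X| - κ₁` in `∂(X)`, so `κ₁` of them
can be matched into `∂(X)`.
-/
open Finset in
theorem Finset.exists_card_eq_injective_of_card_add_le {ι α : Type*} [Fintype ι]
    [DecidableEq α] (t : ι → Finset α) (k : ℕ)
    (h : ∀ s : Finset ι, #s + k ≤ Fintype.card ι + #(s.biUnion t)) :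
    ∃ C : Finset ι, #C = k ∧ ∃ f : C → α, Function.Injective f ∧ ∀ i : C, f i ∈ t i := by
  have hk : k ≤ Fintype.card ι := by simpa using h ∅
  set d := Fintype.card ι - k
  -- `d` extra partners adjacent to every `i` turn the deficiency bound into Hall's condition
  let t' : ι → Finset (α ⊕ Fin d) := fun i => (t i).disjSum univ
  have hall : ∀ s : Finset ι, #s ≤ #(s.biUnion t') := by
    intro s
    obtain rfl | ⟨i₀, hi₀⟩ := s.eq_empty_or_nonempty
    · simp
    have hsub : (s.biUnion t).disjSum univ ⊆ s.biUnion t' := by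
      rintro (a | b) hx
      · obtain ⟨i, hi, ha⟩ := mem_biUnion.1 (inl_mem_disjSum.1 hx)
        exact mem_biUnion.2 ⟨i, hi, inl_mem_disjSum.2 ha⟩
      · exact mem_biUnion.2 ⟨i₀, hi₀, inr_mem_disjSum.2 (mem_univ b)⟩
    have hcard := card_le_card hsub
    rw [card_disjSum, card_univ, Fintype.card_fin] at hcard
    have hdef := h s
    omega
  obtain ⟨F, hFinj, hFt⟩ := (all_card_le_biUnion_card_iff_exists_injective t').1 hall
  have hunmatched : #{i | ¬(F i).isLeft} ≤ d := by
    have hmaps : ∀ i ∈ ({i | ¬(F i).isLeft} : Finset ι), F i ∈ (∅ : Finset α).disjSum univ := by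
      intro i hi
      obtain ⟨b, hb⟩ := Sum.isRight_iff.1 (Sum.not_isLeft.1 (mem_filter.1 hi).2)
      rw [hb, inr_mem_disjSum]
      exact mem_univ b
    simpa using card_le_card_of_injOn F hmaps hFinj.injOn
  have hmatched : k ≤ #{i | (F i).isLeft} := by
    have hsplit := card_filter_add_card_filter_not (s := univ) (fun i => (F i).isLeft)
    rw [card_univ] at hsplit
    omega
  obtain ⟨C, hCsub, hCk⟩ := exists_subset_card_eq hmatched
  have hleft : ∀ i : C, (F i).isLeft := fun i => (mem_filter.1 (hCsub i.2)).2
  refine ⟨C, hCk, fun i => (F i).getLeft (hleft i), fun i j hij => ?_, fun i => ?_⟩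
  · dsimp only at hij
    apply Subtype.ext
    apply hFinj
    rw [← Sum.inl_getLeft (F i) (hleft i), ← Sum.inl_getLeft (F j) (hleft j), hij]
  · rw [← inl_mem_disjSum (t := (univ : Finset (Fin d))), Sum.inl_getLeft]
    exact hFt i

section Graph

open Set

variable {V : Type*} (E : Set (V × V))

theorem gImage_mono {A B : Set V} (h : A ⊆ B) : gImage E A ⊆ gImage E B :=
  fun _ ⟨x, hx, hxy⟩ => ⟨x, h hx, hxy⟩

theorem gImage_subset_union_gBdry (A : Set V) : gImage E A ⊆ A ∪ gBdry E A := by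
  rw [gBdry, union_sdiff_self]
  exact subset_union_right

theorem gBdry_subset_sdiff_union_inter_gBdry {A X : Set V} (hAX : A ⊆ X) :
    gBdry E A ⊆ (X \ A) ∪ (gImage E A ∩ gBdry E X) := by
  rintro y ⟨hyA, hy⟩
  by_cases hyX : y ∈ X
  · exact Or.inl ⟨hyX, hy⟩
  · exact Or.inr ⟨hyA, gImage_mono E hAX hyA, hyX⟩

theorem gKappa_le_encard_gBdry {A : Set V} (hA : A.Finite) (hA₀ : A.Nonempty)
    (hAV : A.encard + gKappa E ≤ (univ : Set V).encard) :
    gKappa E ≤ (gBdry E A).encard := by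
  by_cases hcompl : (gImage E A)ᶜ.Nonempty
  · exact iInf₂_le A ⟨hA, one_le_encard_iff_nonempty.2 hA₀, one_le_encard_iff_nonempty.2 hcompl⟩
  · have hfull : gImage E A = univ := by
      simpa [not_nonempty_iff_eq_empty] using hcompl
    have : A.encard + gKappa E ≤ A.encard + (gBdry E A).encard :=
      calc A.encard + gKappa E ≤ (gImage E A).encard := hfull ▸ hAV
        _ ≤ A.encard + (gBdry E A).encard :=
          (encard_le_encard (gImage_subset_union_gBdry E A)).trans (encard_union_le _ _)
    exact (ENat.add_le_add_iff_left hA.encard_lt_top.ne).1 this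

theorem encard_add_gKappa_le_encard_add_encard_gImage_inter_gBdry {A X : Set V}
    (hX : X.Finite) (hXκ : gKappa E ≤ X.encard)
    (hXV : X.encard + gKappa E ≤ (univ : Set V).encard) (hAX : A ⊆ X) :
    A.encard + gKappa E ≤ X.encard + (gImage E A ∩ gBdry E X).encard := by
  obtain rfl | hA₀ := A.eq_empty_or_nonempty
  · simpa using le_add_right hXκ
  have hκ : gKappa E ≤ (gBdry E A).encard :=
    gKappa_le_encard_gBdry E (hX.subset hAX) hA₀
      ((add_le_add_left (encard_le_encard hAX) _).trans hXV)
  have hbdry : (gBdry E A).encard ≤ (X \ A).encard + (gImage E A ∩ gBdry E X).encard :=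
    (encard_le_encard (gBdry_subset_sdiff_union_inter_gBdry E hAX)).trans (encard_union_le _ _)
  calc A.encard + gKappa E ≤ A.encard + (gBdry E A).encard := by gcongr
    _ ≤ A.encard + ((X \ A).encard + (gImage E A ∩ gBdry E X).encard) := by gcongr
    _ = X.encard + (gImage E A ∩ gBdry E X).encard := by
      rw [← add_assoc, add_comm A.encard, encard_sdiff_add_encard_of_subset hAX]

theorem card_add_le_card_add_card_biUnion [DecidableEq V] {k : ℕ} (hk : gKappa E = k)
    {X : Set V} [Fintype X] (hX : X.Finite) (hXk : (k : ℕ∞) ≤ X.encard)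
    (hXV : X.encard + k ≤ (univ : Set V).encard) (t : X → Finset V)
    (ht : ∀ x, (t x : Set V) = {y | (x.1, y) ∈ E} ∩ gBdry E X) (s : Finset X) :
    s.card + k ≤ Fintype.card X + (s.biUnion t).card := by
  have hs : ((s.biUnion t : Finset V) : Set V) =
      gImage E (Subtype.val '' (s : Set X)) ∩ gBdry E X := by
    ext y
    simp [ht, gImage, and_comm]
  have hbound := encard_add_gKappa_le_encard_add_encard_gImage_inter_gBdry E hX (hk ▸ hXk)
    (hk ▸ hXV) (Subtype.coe_image_subset X s)
  rw [Subtype.val_injective.encard_image, ← hs, hk, encard_eq_coe_toFinset_card X,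
    toFinset_card, encard_coe_eq_coe_finsetCard, encard_coe_eq_coe_finsetCard] at hbound
  exact_mod_cast hbound

end Graph

/-- The strong isoperimetric property for locally finite graphs. -/
theorem stmt_17 {V : Type*} (E : Set (V × V))
    (hlf : ∀ a : V, {y | (a, y) ∈ E}.Finite)
    (k : ℕ) (hk : gKappa E = (k : ℕ∞))
    (X : Set V) (hXfin : X.Finite) (hXk : (k : ℕ∞) ≤ X.encard)
    (hXV : X.encard + (k : ℕ∞) ≤ (Set.univ : Set V).encard) :
    ∃ C ⊆ X, C.encard = (k : ℕ∞) ∧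
      ∃ f : V → V, Set.InjOn f C ∧
        ∀ c ∈ C, f c ∈ gBdry E X ∧ (c, f c) ∈ E := by
  classical
  have : Fintype X := hXfin.fintype
  have hN : ∀ x : X, ({y | (x.1, y) ∈ E} ∩ gBdry E X).Finite := fun x => (hlf x).inter_of_left _
  let t : X → Finset V := fun x => (hN x).toFinset
  have hall (s : Finset X) : s.card + k ≤ Fintype.card X + (s.biUnion t).card :=
    card_add_le_card_add_card_biUnion E hk hXfin hXk hXV t (fun x => (hN x).coe_toFinset) s
  obtain ⟨C, hCk, f, hf, hft⟩ := Finset.exists_card_eq_injective_of_card_add_le t k hall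
  let e : C → V := fun c => c.1.1
  have he : Function.Injective e := Subtype.val_injective.comp Subtype.val_injective
  refine ⟨Set.range e, ?_, ?_, Function.extend e f id, ?_, ?_⟩
  · rintro _ ⟨c, rfl⟩
    exact c.1.2
  · rw [← Set.image_univ, he.encard_image, Set.encard_univ, ENat.card_eq_coe_fintype_card,
      Fintype.card_coe, hCk]
  · rintro _ ⟨a, rfl⟩ _ ⟨b, rfl⟩ hab
    rw [he.extend_apply, he.extend_apply] at hab
    rw [hf hab]
  · rintro _ ⟨c, rfl⟩
    rw [he.extend_apply]
    simpa [t, and_comm] using hft c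
end
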